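/- Let (L_n) be a sequence in (0,1) with L_n → 0, and for each n let p_n be a positive, L_n-periodic, C² solution of (a_{L_n}(x) p_n')' + f(x/L_n, p_n) = 0 on ℝ with 0 < p_n ≤ M. Then the sequence (p_n) is bounded in H¹_loc(ℝ): for every compact interval K ⊂ ℝ there is a constant C(K), independent of n, such that ∫_K (p_n(x)² + p_n'(x)²) dx ≤ C(K) for all n. -/

import Mathlib

open MeasureTheory Filter Topology Set Function

/-! The flux `w = a(x/Lₙ) pₙ'` satisfies `|w'| = |f(x/Lₙ, pₙ)| ≤ F`, where `F` bounds `|f|` on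
`ℝ × [0, M]` by periodicity and compactness. Since `pₙ` is `Lₙ`-periodic, Rolle's theorem gives a
zero of `pₙ'`, hence of `w`, within distance `Lₙ < 1` of every point, so `|w| ≤ F` and
`|pₙ'| ≤ F / α₁`. Together with `0 < pₙ ≤ M` this bounds `pₙ² + pₙ'²` uniformly. -/

theorem exists_abs_le_of_continuous_of_periodic_fst {f : ℝ → ℝ → ℝ} {T : ℝ} (hT : 0 < T)
    (hf : Continuous fun q : ℝ × ℝ => f q.1 q.2) (hper : ∀ x s, f (x + T) s = f x s)
    {K : Set ℝ} (hK : IsCompact K) :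
    ∃ C, ∀ x, ∀ s ∈ K, |f x s| ≤ C := by
  obtain ⟨C, hC⟩ := ((isCompact_Icc (a := 0) (b := T)).prod hK).exists_bound_of_continuousOn
    hf.continuousOn
  refine ⟨C, fun x s hs => ?_⟩
  obtain ⟨y, hy, hxy⟩ := Periodic.exists_mem_Ico₀ (f := fun x => f x s) (fun x => hper x s) hT x
  simpa [hxy] using hC (y, s) ⟨Ico_subset_Icc_self hy, hs⟩

theorem Function.Periodic.exists_mem_Ioo_deriv_eq_zero {p : ℝ → ℝ} {T : ℝ}
    (hper : Periodic p T) (hT : 0 < T) (hp : Continuous p) (x : ℝ) :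
    ∃ c ∈ Ioo (x - T) x, deriv p c = 0 :=
  exists_deriv_eq_zero (by linarith) hp.continuousOn (by simpa using (hper (x - T)).symm)

theorem abs_deriv_le_of_abs_deriv_flux_le {p w : ℝ → ℝ} {T α F : ℝ}
    (hper : Periodic p T) (hT : 0 < T) (hα : 0 < α) (hp : Continuous p) (hw : ∀ x, α ≤ w x)
    (hflux : Differentiable ℝ fun x => w x * deriv p x)
    (hF : ∀ x, |deriv (fun y => w y * deriv p y) x| ≤ F) (x : ℝ) :
    |deriv p x| ≤ F * T / α := by
  obtain ⟨c, hc, hc0⟩ := hper.exists_mem_Ioo_deriv_eq_zero hT hp x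
  have hflux_bound : |w x * deriv p x| ≤ F * T := by
    have hmvt := convex_univ.norm_image_sub_le_of_norm_deriv_le (fun y _ => hflux y)
      (fun y _ => hF y) (mem_univ c) (mem_univ x)
    simp only [hc0, mul_zero, sub_zero, Real.norm_eq_abs] at hmvt
    have hF0 : 0 ≤ F := (abs_nonneg _).trans (hF x)
    calc |w x * deriv p x| ≤ F * |x - c| := hmvt
      _ ≤ F * T := by
        gcongr
        rw [abs_of_pos (by linarith [hc.2])]
        linarith [hc.1]
  rw [le_div_iff₀ hα, mul_comm]
  calc α * |deriv p x| ≤ w x * |deriv p x| := by gcongr; exact hw x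
    _ = |w x * deriv p x| := by rw [abs_mul, abs_of_pos (hα.trans_le (hw x))]
    _ ≤ F * T := hflux_bound

theorem integral_sq_add_sq_le_of_abs_le {u v : ℝ → ℝ} {A B : ℝ}
    (hu : ∀ x, |u x| ≤ A) (hv : ∀ x, |v x| ≤ B) (x₁ x₂ : ℝ) :
    ∫ x in x₁..x₂, (u x ^ 2 + v x ^ 2) ≤ (A ^ 2 + B ^ 2) * |x₂ - x₁| := by
  refine (le_abs_self _).trans ?_
  rw [← Real.norm_eq_abs]
  refine intervalIntegral.norm_integral_le_of_norm_le_const fun x _ => ?_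
  obtain ⟨hu₁, hu₂⟩ := abs_le.mp (hu x)
  obtain ⟨hv₁, hv₂⟩ := abs_le.mp (hv x)
  rw [Real.norm_eq_abs, abs_of_nonneg (by positivity)]
  exact add_le_add (sq_le_sq' hu₁ hu₂) (sq_le_sq' hv₁ hv₂)

theorem stationary_states_bounded_in_H1loc_general
    (a : ℝ → ℝ) (f : ℝ → ℝ → ℝ) (α₁ M : ℝ)
    (L : ℕ → ℝ) (p : ℕ → ℝ → ℝ)
    (ha_C2 : ContDiff ℝ 2 a)
    (hα₁ : 0 < α₁)
    (ha_lb : ∀ x, α₁ ≤ a x)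
    (hf_per : ∀ x s, f (x + 1) s = f x s)
    (hf_C1 : ContDiff ℝ 1 (fun q : ℝ × ℝ => f q.1 q.2))
    (hL : ∀ n, 0 < L n ∧ L n < 1)
    (hp_C2 : ∀ n, ContDiff ℝ 2 (p n))
    (hp_pos : ∀ n x, 0 < p n x) (hp_le : ∀ n x, p n x ≤ M)
    (hp_per : ∀ n x, p n (x + L n) = p n x)
    (hp_eq : ∀ n x,
      deriv (fun y => a (y / L n) * deriv (p n) y) x + f (x / L n) (p n x) = 0) :
    ∀ x₁ x₂ : ℝ, x₁ ≤ x₂ →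
      ∃ C : ℝ, ∀ n,
        (∫ x in x₁..x₂, ((p n x) ^ 2 + (deriv (p n) x) ^ 2)) ≤ C := by
  intro x₁ x₂ _
  obtain ⟨F, hF⟩ := exists_abs_le_of_continuous_of_periodic_fst one_pos hf_C1.continuous hf_per
    (isCompact_Icc (a := 0) (b := M))
  have hF_flux : ∀ n y, |deriv (fun y => a (y / L n) * deriv (p n) y) y| ≤ F := fun n y => by
    rw [eq_neg_of_add_eq_zero_left (hp_eq n y), abs_neg]
    exact hF _ _ ⟨(hp_pos n y).le, hp_le n y⟩
  have hF0 : 0 ≤ F := (abs_nonneg _).trans (hF_flux 0 0)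
  have hp_bound : ∀ n x, |p n x| ≤ M := fun n x => by
    rw [abs_of_pos (hp_pos n x)]; exact hp_le n x
  have hp'_bound : ∀ n x, |deriv (p n) x| ≤ F / α₁ := fun n x => by
    obtain ⟨hLn, hLn1⟩ := hL n
    have hflux_diff : Differentiable ℝ fun y => a (y / L n) * deriv (p n) y :=
      ((ha_C2.differentiable two_ne_zero).comp (differentiable_id.div_const _)).mul
        (hp_C2 n).differentiable_deriv_two
    calc |deriv (p n) x| ≤ F * L n / α₁ :=
          abs_deriv_le_of_abs_deriv_flux_le (hp_per n) hLn hα₁ (hp_C2 n).continuous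
            (fun y => ha_lb _) hflux_diff (hF_flux n) x
      _ ≤ F / α₁ := by gcongr; exact mul_le_of_le_one_right hF0 hLn1.le
  exact ⟨(M ^ 2 + (F / α₁) ^ 2) * |x₂ - x₁|,
    fun n => integral_sq_add_sq_le_of_abs_le (hp_bound n) (hp'_bound n) x₁ x₂⟩

/-- If `Lₙ ∈ (0,1)`, `Lₙ → 0`, and `pₙ` are positive `Lₙ`-periodic `C²`
stationary states with `0 < pₙ ≤ M`, then `(pₙ)` is bounded in `H¹_loc(ℝ)`: on every
compact interval `K` one has `∫_K (pₙ² + (pₙ')²) ≤ C(K)` with `C(K)` independent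
of `n`. -/
theorem stationary_states_bounded_in_H1loc
    (a : ℝ → ℝ) (f : ℝ → ℝ → ℝ) (α₁ α₂ M : ℝ)
    (L : ℕ → ℝ) (p : ℕ → ℝ → ℝ)
    (ha_C2 : ContDiff ℝ 2 a) (ha_per : ∀ x, a (x + 1) = a x)
    (hα₁ : 0 < α₁) (hα₁₂ : α₁ < α₂)
    (ha_lb : ∀ x, α₁ ≤ a x) (ha_ub : ∀ x, a x ≤ α₂)
    (hf_per : ∀ x s, f (x + 1) s = f x s)
    (hf_C1 : ContDiff ℝ 1 (fun q : ℝ × ℝ => f q.1 q.2))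
    (hf_zero : ∀ x, f x 0 = 0)
    (hM : 0 ≤ M) (hf_M : ∀ x s, M ≤ s → f x s ≤ 0)
    (hL : ∀ n, 0 < L n ∧ L n < 1)
    (hL0 : Tendsto L atTop (𝓝 0))
    (hp_C2 : ∀ n, ContDiff ℝ 2 (p n))
    (hp_pos : ∀ n x, 0 < p n x) (hp_le : ∀ n x, p n x ≤ M)
    (hp_per : ∀ n x, p n (x + L n) = p n x)
    (hp_eq : ∀ n x,
      deriv (fun y => a (y / L n) * deriv (p n) y) x + f (x / L n) (p n x) = 0) :
    ∀ x₁ x₂ : ℝ, x₁ ≤ x₂ →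
      ∃ C : ℝ, ∀ n,
        (∫ x in x₁..x₂, ((p n x) ^ 2 + (deriv (p n) x) ^ 2)) ≤ C :=
  stationary_states_bounded_in_H1loc_general a f α₁ M L p ha_C2 hα₁ ha_lb hf_per hf_C1 hL hp_C2
    hp_pos hp_le hp_per hp_eq
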